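/- The binomial(n+1,2) rank-one matrices w w^T, where w ranges over the vectors Σ_{i=j}^{k} e_i for 1 ≤ j ≤ k ≤ n, are linearly independent and span the space of symmetric n×n matrices. Consequently Q_{A_n} is COP-perfect: it is the unique symmetric matrix X with w^T X w = 2 for all such w. -/
import Mathlib


open Matrix

/-- The quadratic form `B[x] = xᵀ B x`. -/
def quadForm {n : ℕ} (B : Matrix (Fin n) (Fin n) ℝ) (x : Fin n → ℝ) : ℝ :=
  x ⬝ᵥ B.mulVec x

/-- The Gram matrix `Q_{A_n}` of the root lattice `A_n`. -/
def QAn (n : ℕ) : Matrix (Fin n) (Fin n) ℝ :=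
  Matrix.of fun i j =>
    if i = j then 2
    else if i.val = j.val + 1 ∨ j.val = i.val + 1 then -1
    else 0

/-- The contiguous 0/1-block vector with ones exactly on positions `j ≤ i ≤ k`. -/
def blockVec {n : ℕ} (p : {p : Fin n × Fin n // p.1 ≤ p.2}) : Fin n → ℝ :=
  fun i => if p.val.1 ≤ i ∧ i ≤ p.val.2 then 1 else 0

namespace QAnAux

abbrev P (n : ℕ) := {p : Fin n × Fin n // p.1 ≤ p.2}

variable {n : ℕ}

lemma W_apply (p : P n) (a b : Fin n) :
    vecMulVec (blockVec p) (blockVec p) a b =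
      if (p.val.1 ≤ a ∧ a ≤ p.val.2) ∧ (p.val.1 ≤ b ∧ b ≤ p.val.2) then (1:ℝ) else 0 := by
  rw [Matrix.vecMulVec_apply]
  unfold blockVec
  by_cases h1 : (p.val.1 ≤ a ∧ a ≤ p.val.2) <;>
    by_cases h2 : (p.val.1 ≤ b ∧ b ≤ p.val.2) <;> simp [h1, h2]

lemma W_symm (p : P n) : (vecMulVec (blockVec p) (blockVec p)).IsSymm := by
  unfold Matrix.IsSymm
  ext a b
  simp [Matrix.transpose_apply, Matrix.vecMulVec_apply, mul_comm]

lemma li : LinearIndependent ℝ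
    (fun p : P n => vecMulVec (blockVec p) (blockVec p)) := by
  rw [Fintype.linearIndependent_iff]
  intro c hc
  suffices H : ∀ m (p : P n), p.val.1.val + (n - 1 - p.val.2.val) ≤ m → c p = 0 by
    exact fun p => H _ p le_rfl
  intro m
  induction m using Nat.strong_induction_on with
  | _ m IH =>
    intro p hp
    have h1 : (∑ q : P n, c q • vecMulVec (blockVec q) (blockVec q)) p.val.1 p.val.2
        = (0 : Matrix (Fin n) (Fin n) ℝ) p.val.1 p.val.2 := by rw [hc]
    rw [Matrix.sum_apply] at h1
    simp only [Matrix.smul_apply, smul_eq_mul, Matrix.zero_apply] at h1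
    have h2 : ∑ q : P n, c q * (vecMulVec (blockVec q) (blockVec q)) p.val.1 p.val.2
        = ∑ q ∈ Finset.univ.filter
            (fun q : P n => (q.val.1 ≤ p.val.1 ∧ p.val.1 ≤ q.val.2) ∧
                (q.val.1 ≤ p.val.2 ∧ p.val.2 ≤ q.val.2)), c q := by
      rw [Finset.sum_filter]
      refine Finset.sum_congr rfl fun q _ => ?_
      rw [W_apply]
      split_ifs <;> simp
    rw [h2] at h1
    have h3 := Finset.sum_eq_single (s := Finset.univ.filter
            (fun q : P n => (q.val.1 ≤ p.val.1 ∧ p.val.1 ≤ q.val.2) ∧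
                (q.val.1 ≤ p.val.2 ∧ p.val.2 ≤ q.val.2))) (f := fun q => c q) p
      (by
        intro q hq hne
        simp only [Finset.mem_filter, Finset.mem_univ, true_and] at hq
        refine IH (q.val.1.val + (n - 1 - q.val.2.val)) ?_ q le_rfl
        have hq2 := q.val.2.isLt
        have hp2 := p.val.2.isLt
        have hl1 : q.val.1.val ≤ p.val.1.val := hq.1.1
        have hl2 : p.val.2.val ≤ q.val.2.val := hq.2.2
        have hne' : q.val.1.val ≠ p.val.1.val ∨ q.val.2.val ≠ p.val.2.val := by
          by_contra hcon
          push_neg at hcon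
          exact hne (Subtype.ext (Prod.ext (Fin.ext hcon.1) (Fin.ext hcon.2)))
        omega)
      (by
        intro hnm
        exfalso
        exact hnm (Finset.mem_filter.mpr ⟨Finset.mem_univ _,
          ⟨le_rfl, p.property⟩, ⟨p.property, le_rfl⟩⟩))
    rw [h1] at h3
    exact h3.symm

/-- The submodule of symmetric matrices. -/
def symM (n : ℕ) : Submodule ℝ (Matrix (Fin n) (Fin n) ℝ) where
  carrier := {A | A.IsSymm}
  add_mem' := fun h1 h2 => h1.add h2
  zero_mem' := Matrix.isSymm_zero
  smul_mem' := fun c A h => by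
    simp only [Set.mem_setOf_eq, Matrix.IsSymm] at *
    rw [Matrix.transpose_smul, h]

/-- Coordinates of a symmetric matrix on the upper triangle. -/
def Phi (n : ℕ) : symM n →ₗ[ℝ] (P n → ℝ) where
  toFun A := fun p => A.val p.val.1 p.val.2
  map_add' A B := by funext p; rfl
  map_smul' c A := by funext p; rfl

lemma Phi_inj : Function.Injective (Phi n) := by
  intro A B h
  apply Subtype.ext
  ext a b
  rcases le_total a b with hab | hab
  · exact congrFun h ⟨(a, b), hab⟩
  · have h2 : A.val b a = B.val b a := congrFun h ⟨(b, a), hab⟩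
    have hA : A.val a b = A.val b a := A.property.apply b a
    have hB : B.val a b = B.val b a := B.property.apply b a
    rw [hA, hB, h2]

lemma span_eq : Submodule.span ℝ
    (Set.range (fun p : P n => vecMulVec (blockVec p) (blockVec p))) = symM n := by
  have hle : Submodule.span ℝ
      (Set.range (fun p : P n => vecMulVec (blockVec p) (blockVec p))) ≤ symM n := by
    rw [Submodule.span_le]
    rintro _ ⟨p, rfl⟩
    exact W_symm p
  refine Submodule.eq_of_le_of_finrank_le hle ?_
  have h1 : Module.finrank ℝ (Submodule.span ℝ
      (Set.range (fun p : P n => vecMulVec (blockVec p) (blockVec p))))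
      = Fintype.card (P n) := finrank_span_eq_card li
  have h2 : Module.finrank ℝ (symM n) ≤ Fintype.card (P n) := by
    have := LinearMap.finrank_le_finrank_of_injective (Phi_inj (n := n))
    rwa [Module.finrank_fintype_fun_eq_card] at this
  rw [h1]
  exact h2

lemma quadForm_eq (B : Matrix (Fin n) (Fin n) ℝ) (x : Fin n → ℝ) :
    quadForm B x = ∑ a, ∑ b, B a b * (x a * x b) := by
  simp only [quadForm, dotProduct, Matrix.mulVec]
  refine Finset.sum_congr rfl fun a _ => ?_
  rw [Finset.mul_sum]
  exact Finset.sum_congr rfl fun b _ => by ring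

/-- The `A_n` Gram coefficients as a function of natural numbers. -/
def Qf (a b : ℕ) : ℝ := if a = b then 2 else if a = b + 1 ∨ b = a + 1 then -1 else 0

lemma QAn_apply (a b : Fin n) : QAn n a b = Qf a.val b.val := by
  simp [QAn, Qf, Fin.ext_iff]

lemma block_sum : ∀ (d j : ℕ),
    ∑ a ∈ Finset.Icc j (j + d), ∑ b ∈ Finset.Icc j (j + d), Qf a b = 2 := by
  intro d
  induction d with
  | zero => intro j; simp [Qf]
  | succ d IH =>
    intro j
    have hins : Finset.Icc j (j + (d + 1)) = insert (j + d + 1) (Finset.Icc j (j + d)) := by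
      ext x; simp only [Finset.mem_Icc, Finset.mem_insert]; omega
    have hnot : j + d + 1 ∉ Finset.Icc j (j + d) := by simp [Finset.mem_Icc]
    have hmem : j + d ∈ Finset.Icc j (j + d) := by simp [Finset.mem_Icc]
    have hrow : ∑ b ∈ Finset.Icc j (j + d), Qf (j + d + 1) b = -1 := by
      rw [Finset.sum_eq_single (j + d)]
      · unfold Qf; split_ifs with h1 h2 <;> first | rfl | (exfalso; omega)
      · intro b hb hne
        simp only [Finset.mem_Icc] at hb
        unfold Qf; split_ifs with h1 h2 <;> first | rfl | (exfalso; omega)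
      · intro h; exact absurd hmem h
    have hcol : ∑ a ∈ Finset.Icc j (j + d), Qf a (j + d + 1) = -1 := by
      rw [Finset.sum_eq_single (j + d)]
      · unfold Qf; split_ifs with h1 h2 <;> first | rfl | (exfalso; omega)
      · intro a ha hne
        simp only [Finset.mem_Icc] at ha
        unfold Qf; split_ifs with h1 h2 <;> first | rfl | (exfalso; omega)
      · intro h; exact absurd hmem h
    have hdiag : Qf (j + d + 1) (j + d + 1) = 2 := by unfold Qf; rw [if_pos rfl]
    rw [hins, Finset.sum_insert hnot, Finset.sum_insert hnot,
      Finset.sum_congr rfl (fun a _ => Finset.sum_insert hnot),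
      Finset.sum_add_distrib, hrow, hcol, IH j, hdiag]
    ring

lemma quadQ (p : P n) : quadForm (QAn n) (blockVec p) = 2 := by
  rw [quadForm_eq]
  set j := p.val.1.val with hj
  set k := p.val.2.val with hk
  have hjk : j ≤ k := p.property
  have hkn : k < n := p.val.2.isLt
  have hstep : ∀ a b : Fin n, QAn n a b * (blockVec p a * blockVec p b)
      = (if j ≤ a.val ∧ a.val ≤ k then (1:ℝ) else 0) *
        ((if j ≤ b.val ∧ b.val ≤ k then (1:ℝ) else 0) * Qf a.val b.val) := by
    intro a b
    rw [QAn_apply]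
    simp only [blockVec, Fin.le_def, ← hj, ← hk]
    ring
  rw [Finset.sum_congr rfl fun a _ => Finset.sum_congr rfl fun b _ => hstep a b]
  have hfil : (Finset.range n).filter (fun a => j ≤ a ∧ a ≤ k) = Finset.Icc j k := by
    ext x
    simp only [Finset.mem_Icc, Finset.mem_filter, Finset.mem_range]
    omega
  have key : ∀ g : ℕ → ℝ,
      (∑ a ∈ Finset.range n, (if j ≤ a ∧ a ≤ k then (1:ℝ) else 0) * g a)
        = ∑ a ∈ Finset.Icc j k, g a := by
    intro g
    rw [← hfil, Finset.sum_filter]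
    refine Finset.sum_congr rfl fun a _ => ?_
    split_ifs <;> simp
  have hfin : (∑ a : Fin n, ∑ b : Fin n,
        (if j ≤ a.val ∧ a.val ≤ k then (1:ℝ) else 0) *
        ((if j ≤ b.val ∧ b.val ≤ k then (1:ℝ) else 0) * Qf a.val b.val))
      = ∑ a ∈ Finset.range n, ∑ b ∈ Finset.range n,
        (if j ≤ a ∧ a ≤ k then (1:ℝ) else 0) *
        ((if j ≤ b ∧ b ≤ k then (1:ℝ) else 0) * Qf a b) := by
    rw [← Fin.sum_univ_eq_sum_range (fun a => ∑ b ∈ Finset.range n,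
        (if j ≤ a ∧ a ≤ k then (1:ℝ) else 0) *
        ((if j ≤ b ∧ b ≤ k then (1:ℝ) else 0) * Qf a b))]
    refine Finset.sum_congr rfl fun a _ => ?_
    exact Fin.sum_univ_eq_sum_range (fun b =>
        (if j ≤ a.val ∧ a.val ≤ k then (1:ℝ) else 0) *
        ((if j ≤ b ∧ b ≤ k then (1:ℝ) else 0) * Qf a.val b)) n
  rw [hfin]
  have hfac : ∀ a : ℕ, ∑ b ∈ Finset.range n,
      (if j ≤ a ∧ a ≤ k then (1:ℝ) else 0) * ((if j ≤ b ∧ b ≤ k then (1:ℝ) else 0) * Qf a b)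
      = (if j ≤ a ∧ a ≤ k then (1:ℝ) else 0) * ∑ b ∈ Finset.range n,
        (if j ≤ b ∧ b ≤ k then (1:ℝ) else 0) * Qf a b := fun a => (Finset.mul_sum _ _ _).symm
  rw [Finset.sum_congr rfl fun a _ => hfac a]
  rw [key (fun a => ∑ b ∈ Finset.range n,
      (if j ≤ b ∧ b ≤ k then (1:ℝ) else 0) * Qf a b)]
  rw [Finset.sum_congr rfl fun a _ => key (fun b => Qf a b)]
  have hkex : k = j + (k - j) := by omega
  rw [hkex]
  exact block_sum (k - j) j

end QAnAux

open QAnAux in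
theorem QAn_perfect {n : ℕ} (hn : 2 ≤ n) :
    LinearIndependent ℝ
        (fun p : {p : Fin n × Fin n // p.1 ≤ p.2} => vecMulVec (blockVec p) (blockVec p)) ∧
      (∀ A : Matrix (Fin n) (Fin n) ℝ, A.IsSymm →
        A ∈ Submodule.span ℝ
          (Set.range (fun p : {p : Fin n × Fin n // p.1 ≤ p.2} =>
            vecMulVec (blockVec p) (blockVec p)))) ∧
      (∀ X : Matrix (Fin n) (Fin n) ℝ, X.IsSymm →
        (∀ p : {p : Fin n × Fin n // p.1 ≤ p.2}, quadForm X (blockVec p) = 2) →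
        X = QAn n) := by
  refine ⟨li, fun A hA => ?_, fun X hX hq => ?_⟩
  · rw [span_eq]; exact hA
  · -- uniqueness
    set Y := X - QAn n with hY
    have hQsym : (QAn n).IsSymm := by
      unfold Matrix.IsSymm
      ext a b
      simp only [Matrix.transpose_apply, QAn, Matrix.of_apply, Fin.ext_iff]
      split_ifs <;> first | rfl | (exfalso; omega)
    have hQ2 : ∀ p : P n, quadForm (QAn n) (blockVec p) = 2 := quadQ
    have hYsym : Y.IsSymm := hX.sub hQsym
    have hmem : Y ∈ Submodule.span ℝ
        (Set.range (fun p : P n => vecMulVec (blockVec p) (blockVec p))) := by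
      rw [span_eq]; exact hYsym
    obtain ⟨c, hc⟩ := (Submodule.mem_span_range_iff_exists_fun ℝ).mp hmem
    have hzero : ∀ p : P n, ∑ a, ∑ b, Y a b *
        (vecMulVec (blockVec p) (blockVec p)) a b = 0 := by
      intro p
      have hsubq : quadForm Y (blockVec p) = 0 := by
        have : quadForm Y (blockVec p)
            = quadForm X (blockVec p) - quadForm (QAn n) (blockVec p) := by
          simp only [quadForm_eq, hY, Matrix.sub_apply, sub_mul, Finset.sum_sub_distrib]
        rw [this, hq p, hQ2 p]; ring
      rw [quadForm_eq] at hsubq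
      rw [← hsubq]
      refine Finset.sum_congr rfl fun a _ => Finset.sum_congr rfl fun b _ => ?_
      rw [Matrix.vecMulVec_apply]
    have hYentry : ∀ a b, Y a b = ∑ p : P n,
        c p * (vecMulVec (blockVec p) (blockVec p)) a b := by
      intro a b
      rw [← hc, Matrix.sum_apply]
      exact Finset.sum_congr rfl fun p _ => by rw [Matrix.smul_apply, smul_eq_mul]
    have hsq : ∑ a, ∑ b, (Y a b) ^ 2 = 0 := by
      calc ∑ a, ∑ b, (Y a b) ^ 2
          = ∑ a, ∑ b, ∑ p : P n,
            c p * (Y a b * (vecMulVec (blockVec p) (blockVec p)) a b) := by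
            refine Finset.sum_congr rfl fun a _ => Finset.sum_congr rfl fun b _ => ?_
            rw [sq]
            nth_rewrite 2 [hYentry a b]
            rw [Finset.mul_sum]
            exact Finset.sum_congr rfl fun p _ => by ring
        _ = ∑ p : P n, ∑ a, ∑ b,
            c p * (Y a b * (vecMulVec (blockVec p) (blockVec p)) a b) := by
            rw [Finset.sum_congr rfl fun a _ => Finset.sum_comm]
            exact Finset.sum_comm
        _ = ∑ p : P n, c p * ∑ a, ∑ b,
            Y a b * (vecMulVec (blockVec p) (blockVec p)) a b := by
            refine Finset.sum_congr rfl fun p _ => ?_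
            rw [Finset.mul_sum]
            exact Finset.sum_congr rfl fun a _ => by rw [Finset.mul_sum]
        _ = 0 := by
            refine Finset.sum_eq_zero fun p _ => ?_
            rw [hzero p, mul_zero]
    have hY0 : Y = 0 := by
      ext a b
      have h1 := (Finset.sum_eq_zero_iff_of_nonneg
        (fun a _ => Finset.sum_nonneg fun b _ => sq_nonneg (Y a b))).mp hsq a
        (Finset.mem_univ a)
      have h2 := (Finset.sum_eq_zero_iff_of_nonneg
        (fun b _ => sq_nonneg (Y a b))).mp h1 b (Finset.mem_univ b)
      have := pow_eq_zero_iff (n := 2) (by norm_num) |>.mp h2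
      simpa using this
    have := sub_eq_zero.mp hY0
    exact this
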